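/- Let X and Y be one-sided shift spaces such that neither contains an aperiodic isolated point. Then every continuous orbit equivalence h: X → Y maps eventually periodic points to eventually periodic points. -/

import Mathlib

open Function Set

/-- The shift map on one-sided sequences. -/
def shiftMap {A : Type*} : (ℕ → A) → (ℕ → A) := fun x n => x (n + 1)

/-- A one-sided shift space: a closed, shift-invariant subset of `A^ℕ`. -/
def IsShiftSpace {A : Type*} [TopologicalSpace A] (X : Set (ℕ → A)) : Prop :=
  IsClosed X ∧ ∀ x ∈ X, shiftMap x ∈ X

/-- A point is eventually periodic if `σ^n(x) = σ^m(x)` for some `n ≠ m`. -/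
def EventuallyPeriodic {A : Type*} (x : ℕ → A) : Prop :=
  ∃ p m : ℕ, 0 < p ∧ shiftMap^[m + p] x = shiftMap^[m] x

/-- `x` is an isolated point of `X`. -/
def IsolatedIn {A : Type*} [TopologicalSpace A] (X : Set (ℕ → A)) (x : ℕ → A) : Prop :=
  ∃ U : Set (ℕ → A), IsOpen U ∧ U ∩ X = {x}

/-!
Replacing `x` by a point `z = σ^m x` of its orbit with `σ^p z = z`, the iterated cocycle identity
gives `σ^L (h z) = σ^K (h z)`, where `L` and `K` are the sums of `l_X` and `k_X` along the period.
If `L ≠ K`, `h z` is eventually periodic. If `L = K`, local constancy of the cocycles makes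
`σ^L ∘ h` invariant under `σ^p` on a cylinder around `z`; a point `w ≠ z` sharing a long prefix
with `z` then yields `|B| ^ L + 1` distinct points `σ^(j p) w` whose images under `h` share their
`σ^L`-tail, so two of them have the same image, contradicting injectivity. Hence `z` is isolated,
so is `h z`, and `h z` is eventually periodic by hypothesis.
-/

open PiNat Topology

section Shift

variable {A : Type*}

lemma shiftMap_iterate_apply (n : ℕ) (x : ℕ → A) (t : ℕ) :
    shiftMap^[n] x t = x (t + n) := by
  induction n generalizing x with
  | zero => rfl
  | succ n ih => rw [iterate_succ_apply, ih]; rfl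

lemma continuous_shiftMap [TopologicalSpace A] : Continuous (shiftMap : (ℕ → A) → ℕ → A) :=
  continuous_pi fun n => continuous_apply (n + 1)

lemma eventuallyPeriodic_iterate_iff {x : ℕ → A} (n : ℕ) :
    EventuallyPeriodic (shiftMap^[n] x) ↔ EventuallyPeriodic x := by
  constructor
  · rintro ⟨p, m, hp, heq⟩
    refine ⟨p, m + n, hp, ?_⟩
    rw [← iterate_add_apply, ← iterate_add_apply] at heq
    rwa [add_right_comm]
  · rintro ⟨p, m, hp, heq⟩
    refine ⟨p, m, hp, ?_⟩
    rw [← iterate_add_apply, ← iterate_add_apply, add_comm _ n, iterate_add_apply, heq,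
      ← iterate_add_apply, add_comm]

lemma eventuallyPeriodic_of_iterate_eq {x : ℕ → A} {a b : ℕ} (hab : a ≠ b)
    (h : shiftMap^[a] x = shiftMap^[b] x) : EventuallyPeriodic x := by
  rcases hab.lt_or_gt with hlt | hlt
  · exact ⟨b - a, a, by omega, by rw [Nat.add_sub_cancel' hlt.le, h]⟩
  · exact ⟨a - b, b, by omega, by rw [Nat.add_sub_cancel' hlt.le, h]⟩

lemma eq_of_iterate_shiftMap_eq {y y' : ℕ → A} {L : ℕ}
    (hshift : shiftMap^[L] y = shiftMap^[L] y') (hprefix : ∀ t < L, y t = y' t) : y = y' := by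
  funext t
  rcases lt_or_ge t L with ht | ht
  · exact hprefix t ht
  · simpa [shiftMap_iterate_apply, Nat.sub_add_cancel ht] using congrFun hshift (t - L)

lemma iterate_shiftMap_mem_cylinder {w z : ℕ → A} {N a : ℕ}
    (hw : w ∈ cylinder z (N + a)) : shiftMap^[a] w ∈ cylinder (shiftMap^[a] z) N := fun t ht => by
  simp only [shiftMap_iterate_apply]
  exact hw _ (by omega)

/-- Evaluating at `d - q - a` compares `w (d - q) = z (d - q) = z d` with `w d`. -/
lemma iterate_shiftMap_ne_of_isPeriodicPt {z w : ℕ → A} {q a d : ℕ}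
    (hz : IsPeriodicPt shiftMap q z) (hq : 0 < q) (hw : w ∈ cylinder z d) (hd : w d ≠ z d)
    (had : a + q ≤ d) : shiftMap^[a] w ≠ shiftMap^[a + q] w := by
  intro heq
  have hw' : w (d - q) = w d := by
    simpa [shiftMap_iterate_apply, show d - q - a + a = d - q by omega,
      show d - q - a + (a + q) = d by omega] using congrFun heq (d - q - a)
  have hz' : z (d - q + q) = z (d - q) := by
    rw [← shiftMap_iterate_apply q z]; exact congrFun hz (d - q)
  rw [Nat.sub_add_cancel (by omega)] at hz'
  exact hd (by rw [← hw', hw _ (by omega), hz'])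

lemma eq_of_iterate_shiftMap_mul_eq {z w : ℕ → A} {p d a b : ℕ}
    (hz : IsPeriodicPt shiftMap p z) (hp : 0 < p) (hw : w ∈ cylinder z d) (hd : w d ≠ z d)
    (ha : a * p ≤ d) (hb : b * p ≤ d) (heq : shiftMap^[a * p] w = shiftMap^[b * p] w) :
    a = b := by
  have key : ∀ a b, a < b → b * p ≤ d → shiftMap^[a * p] w ≠ shiftMap^[b * p] w := by
    intro a b hab hb
    have hsplit : b * p = a * p + (b - a) * p := by rw [← add_mul, Nat.add_sub_cancel' hab.le]
    rw [hsplit] at hb ⊢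
    exact iterate_shiftMap_ne_of_isPeriodicPt (hz.const_mul (b - a))
      (Nat.mul_pos (by omega) hp) hw hd hb
  rcases lt_trichotomy a b with hab | rfl | hab
  · exact absurd heq (key a b hab hb)
  · rfl
  · exact absurd heq.symm (key b a hab ha)

end Shift

section Cylinders

variable {A : Type*} [TopologicalSpace A] [DiscreteTopology A]

lemma exists_cylinder_subset_of_mem_nhds {U : Set (ℕ → A)} {ξ : ℕ → A} (hU : U ∈ 𝓝 ξ) :
    ∃ N, cylinder ξ N ⊆ U := by
  obtain ⟨_, ⟨x, N, rfl⟩, hξ, hsub⟩ := (isTopologicalBasis_cylinders fun _ => A).mem_nhds_iff.1 hU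
  exact ⟨N, mem_cylinder_iff_eq.1 hξ ▸ hsub⟩

lemma ContinuousOn.exists_cylinder_eq {C : Type*} [TopologicalSpace C] [DiscreteTopology C]
    {X : Set (ℕ → A)} {f : (ℕ → A) → C} (hf : ContinuousOn f X) {ξ : ℕ → A} (hξ : ξ ∈ X) :
    ∃ N, ∀ w ∈ X, w ∈ cylinder ξ N → f w = f ξ := by
  obtain ⟨U, hU, hUsub⟩ := mem_nhdsWithin_iff_exists_mem_nhds_inter.1
    (hf ξ hξ (isOpen_discrete {f ξ} |>.mem_nhds rfl))
  obtain ⟨N, hN⟩ := exists_cylinder_subset_of_mem_nhds hU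
  exact ⟨N, fun w hw hwξ => hUsub ⟨hN hwξ, hw⟩⟩

lemma exists_ne_mem_cylinder_of_not_isolatedIn {X : Set (ℕ → A)} {z : ℕ → A}
    (hiso : ¬IsolatedIn X z) (hz : z ∈ X) (N : ℕ) : ∃ w ∈ X, w ∈ cylinder z N ∧ w ≠ z := by
  by_contra! hcon
  exact hiso ⟨cylinder z N, isOpen_cylinder _ z N,
    eq_singleton_iff_unique_mem.2 ⟨⟨self_mem_cylinder z N, hz⟩, fun w hw => hcon w hw.2 hw.1⟩⟩

end Cylinders

lemma IsolatedIn.of_leftInvOn {A B : Type*} [TopologicalSpace A] [TopologicalSpace B]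
    {X : Set (ℕ → A)} {Y : Set (ℕ → B)} {h : (ℕ → A) → (ℕ → B)} {h' : (ℕ → B) → (ℕ → A)}
    (hc' : ContinuousOn h' Y) (hm' : MapsTo h' Y X) (hleft : LeftInvOn h' h X)
    (hright : LeftInvOn h h' Y) {x : ℕ → A} (hx : x ∈ X) (hhx : h x ∈ Y) (hiso : IsolatedIn X x) :
    IsolatedIn Y (h x) := by
  obtain ⟨U, hU, hUX⟩ := hiso
  obtain ⟨V, hV, hVY⟩ := continuousOn_iff'.1 hc' U hU
  refine ⟨V, hV, ?_⟩
  rw [← hVY]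
  refine eq_singleton_iff_unique_mem.2 ⟨⟨?_, hhx⟩, fun y ⟨hyU, hyY⟩ => ?_⟩
  · rw [mem_preimage, hleft hx]
    exact (hUX.symm ▸ mem_singleton x : x ∈ U ∩ X).1
  · have : h' y ∈ U ∩ X := ⟨hyU, hm' hyY⟩
    rw [hUX, mem_singleton_iff] at this
    rw [← hright hyY, this]

section Cocycle

variable {α β : Type*} {f : α → α} {T : β → β} {s : Set α} {h : α → β} {k l : α → ℕ}

lemma iterate_birkhoffSum_cocycle (hs : MapsTo f s s)
    (hcoc : ∀ x ∈ s, T^[l x] (h x) = T^[k x] (h (f x))) (n : ℕ) {x : α} (hx : x ∈ s) :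
    T^[birkhoffSum f l n x] (h x) = T^[birkhoffSum f k n x] (h (f^[n] x)) := by
  induction n with
  | zero => rfl
  | succ n ih =>
    rw [birkhoffSum_succ, birkhoffSum_succ, add_comm, iterate_add_apply, ih,
      ← iterate_add_apply, add_comm, iterate_add_apply, hcoc _ (hs.iterate n hx),
      ← iterate_add_apply, add_comm, ← iterate_succ_apply' f n x]

lemma ContinuousOn.birkhoffSum [TopologicalSpace α] [TopologicalSpace β] [AddCommMonoid β]
    [ContinuousAdd β] {g : α → β} (hf : Continuous f) (hs : MapsTo f s s) (hg : ContinuousOn g s)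
    (n : ℕ) : ContinuousOn (birkhoffSum f g n) s :=
  continuousOn_finsetSum _ fun i _ =>
    hg.comp (hf.iterate i).continuousOn (hs.iterate i)

end Cocycle

section Recurrence

variable {A B : Type*} [TopologicalSpace A] [DiscreteTopology A] {X : Set (ℕ → A)}
  {h : (ℕ → A) → (ℕ → B)} {k l : (ℕ → A) → ℕ}

lemma exists_cylinder_iterate_eq_of_birkhoffSum_eq (hX : MapsTo shiftMap X X)
    (hk : ContinuousOn k X) (hl : ContinuousOn l X)
    (hcoc : ∀ x ∈ X, shiftMap^[l x] (h x) = shiftMap^[k x] (h (shiftMap x)))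
    {z : ℕ → A} (hzX : z ∈ X) {p : ℕ}
    (hsum : birkhoffSum shiftMap l p z = birkhoffSum shiftMap k p z) :
    ∃ N, ∀ v ∈ X, v ∈ cylinder z N → shiftMap^[birkhoffSum shiftMap l p z] (h v) =
      shiftMap^[birkhoffSum shiftMap l p z] (h (shiftMap^[p] v)) := by
  obtain ⟨Nl, hNl⟩ := (hl.birkhoffSum continuous_shiftMap hX p).exists_cylinder_eq hzX
  obtain ⟨Nk, hNk⟩ := (hk.birkhoffSum continuous_shiftMap hX p).exists_cylinder_eq hzX
  refine ⟨max Nl Nk, fun v hv hvz => ?_⟩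
  have hcocv := iterate_birkhoffSum_cocycle hX hcoc p hv
  rwa [hNl v hv (cylinder_anti _ (le_max_left _ _) hvz),
    hNk v hv (cylinder_anti _ (le_max_right _ _) hvz), ← hsum] at hcocv

theorem isolatedIn_of_birkhoffSum_eq [Fintype B] (hX : MapsTo shiftMap X X) (hinj : InjOn h X)
    (hk : ContinuousOn k X) (hl : ContinuousOn l X)
    (hcoc : ∀ x ∈ X, shiftMap^[l x] (h x) = shiftMap^[k x] (h (shiftMap x)))
    {z : ℕ → A} (hzX : z ∈ X) {p : ℕ} (hz : IsPeriodicPt shiftMap p z) (hp : 0 < p)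
    (hsum : birkhoffSum shiftMap l p z = birkhoffSum shiftMap k p z) : IsolatedIn X z := by
  by_contra hiso
  set L := birkhoffSum shiftMap l p z
  set J := Fintype.card B ^ L
  obtain ⟨N, hN⟩ := exists_cylinder_iterate_eq_of_birkhoffSum_eq hX hk hl hcoc hzX hsum
  obtain ⟨w, hwX, hwz, hne⟩ := exists_ne_mem_cylinder_of_not_isolatedIn hiso hzX (N + J * p)
  set d := firstDiff w z
  have hNd : N + J * p ≤ d := (mem_cylinder_iff_le_firstDiff hne _).1 hwz
  have htail : ∀ j ≤ J, shiftMap^[L] (h (shiftMap^[j * p] w)) = shiftMap^[L] (h w) := by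
    intro j hj
    induction j with
    | zero => rw [zero_mul, iterate_zero_apply]
    | succ j ih =>
      have hjw : shiftMap^[j * p] w ∈ cylinder z N := by
        rw [← (hz.const_mul j).eq]
        exact iterate_shiftMap_mem_cylinder
          (cylinder_anti _ (by nlinarith) (mem_cylinder_firstDiff w z))
      rw [← ih (by omega), hN _ (hX.iterate _ hwX) hjw, ← iterate_add_apply, add_mul, one_mul,
        add_comm]
  have hprefix_inj :
      Injective fun j : Fin (J + 1) => fun t : Fin L => h (shiftMap^[j * p] w) t := by
    intro j j' hjj'
    have hj := Nat.lt_succ_iff.1 j.isLt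
    have hj' := Nat.lt_succ_iff.1 j'.isLt
    have himg : h (shiftMap^[j * p] w) = h (shiftMap^[j' * p] w) :=
      eq_of_iterate_shiftMap_eq ((htail j hj).trans (htail j' hj').symm)
        fun t ht => congrFun hjj' ⟨t, ht⟩
    exact Fin.ext <| eq_of_iterate_shiftMap_mul_eq hz hp (mem_cylinder_firstDiff w z)
      (apply_firstDiff_ne hne) (by nlinarith) (by nlinarith)
      (hinj (hX.iterate _ hwX) (hX.iterate _ hwX) himg)
  have hcard := Fintype.card_le_of_injective _ hprefix_inj
  simp only [Fintype.card_fin, Fintype.card_fun] at hcard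
  omega

end Recurrence

theorem coe_preserves_eventuallyPeriodic_general {A B : Type*}
    [TopologicalSpace A] [DiscreteTopology A] [Fintype B] [TopologicalSpace B]
    (X : Set (ℕ → A)) (Y : Set (ℕ → B))
    (hX : IsShiftSpace X)
    (hYiso : ∀ y ∈ Y, IsolatedIn Y y → EventuallyPeriodic y)
    (h : (ℕ → A) → (ℕ → B)) (h' : (ℕ → B) → (ℕ → A))
    (kX lX : (ℕ → A) → ℕ)
    (hm : MapsTo h X Y) (hm' : MapsTo h' Y X)
    (hleft : ∀ x ∈ X, h' (h x) = x) (hright : ∀ y ∈ Y, h (h' y) = y)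
    (hc' : ContinuousOn h' Y)
    (hkXc : ContinuousOn kX X) (hlXc : ContinuousOn lX X)
    (hcocX : ∀ x ∈ X, shiftMap^[lX x] (h x) = shiftMap^[kX x] (h (shiftMap x))) :
    ∀ x ∈ X, EventuallyPeriodic x → EventuallyPeriodic (h x) := by
  rintro x hx ⟨p, m, hp, hper⟩
  have hXσ : MapsTo shiftMap X X := hX.2
  set z := shiftMap^[m] x
  have hzX : z ∈ X := hXσ.iterate m hx
  have hz : IsPeriodicPt shiftMap p z := by
    rw [IsPeriodicPt, IsFixedPt, ← iterate_add_apply, add_comm]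
    exact hper
  suffices hhz : EventuallyPeriodic (h z) by
    rw [← eventuallyPeriodic_iterate_iff (birkhoffSum shiftMap lX m x),
      iterate_birkhoffSum_cocycle hXσ hcocX m hx]
    exact (eventuallyPeriodic_iterate_iff _).2 hhz
  by_cases hsum : birkhoffSum shiftMap lX p z = birkhoffSum shiftMap kX p z
  · have hziso :=
      isolatedIn_of_birkhoffSum_eq hXσ (LeftInvOn.injOn hleft) hkXc hlXc hcocX hzX hz hp hsum
    exact hYiso _ (hm hzX) (hziso.of_leftInvOn hc' hm' hleft hright hzX (hm hzX))
  · have hcoc := iterate_birkhoffSum_cocycle hXσ hcocX p hzX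
    rw [hz.eq] at hcoc
    exact eventuallyPeriodic_of_iterate_eq hsum hcoc

/-- If neither `X` nor `Y` contains an aperiodic isolated point, then every
continuous orbit equivalence `h : X → Y` maps eventually periodic points to
eventually periodic points. -/
theorem coe_preserves_eventuallyPeriodic {A B : Type*} [Fintype A]
    [TopologicalSpace A] [DiscreteTopology A] [Fintype B] [TopologicalSpace B]
    [DiscreteTopology B]
    (X : Set (ℕ → A)) (Y : Set (ℕ → B))
    (hX : IsShiftSpace X) (hY : IsShiftSpace Y)
    (hXiso : ∀ x ∈ X, IsolatedIn X x → EventuallyPeriodic x)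
    (hYiso : ∀ y ∈ Y, IsolatedIn Y y → EventuallyPeriodic y)
    (h : (ℕ → A) → (ℕ → B)) (h' : (ℕ → B) → (ℕ → A))
    (kX lX : (ℕ → A) → ℕ) (kY lY : (ℕ → B) → ℕ)
    (hm : MapsTo h X Y) (hm' : MapsTo h' Y X)
    (hleft : ∀ x ∈ X, h' (h x) = x) (hright : ∀ y ∈ Y, h (h' y) = y)
    (hc : ContinuousOn h X) (hc' : ContinuousOn h' Y)
    (hkXc : ContinuousOn kX X) (hlXc : ContinuousOn lX X)
    (hkYc : ContinuousOn kY Y) (hlYc : ContinuousOn lY Y)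
    (hcocX : ∀ x ∈ X, shiftMap^[lX x] (h x) = shiftMap^[kX x] (h (shiftMap x)))
    (hcocY : ∀ y ∈ Y, shiftMap^[lY y] (h' y) = shiftMap^[kY y] (h' (shiftMap y))) :
    ∀ x ∈ X, EventuallyPeriodic x → EventuallyPeriodic (h x) :=
  coe_preserves_eventuallyPeriodic_general X Y hX hYiso h h' kX lX hm hm' hleft hright hc' hkXc hlXc
    hcocX
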